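/- For P > 0, s̄ ∈ (0,1], and ī ∈ [0,1], define NR = 1 + (P/s̄)(1−D̄) + P·D̄ with D̄ = 2^{−r̄} ∈ [0,1], and x^∞(ī) = 1 + ((P/s̄)²(1−D̄)²(1−ī s̄)(ī s̄)) / (1 + P D̄ + (P/s̄)(1−D̄)(1−ī s̄))². Then the argument of the logarithm in the asymptotic throughput formula is positive; i.e., NR·x^∞(ī) − (P/s̄)(1−D̄)(1−ī s̄)·(c·ī s̄ + 1)² > 0, where c = (P/s̄)(1−D̄)/(1 + (P/s̄)(1−D̄)(1−ī s̄) + P D̄). -/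
import Mathlib

lemma throughput_aux (a b t : ℝ) (ha : 0 ≤ a) (hb : 0 ≤ b) (ht0 : 0 ≤ t) (ht1 : t ≤ 1) :
    0 < (1 + a + b) * (1 + (a ^ 2 * (1 - t) * t) / (1 + b + a * (1 - t)) ^ 2)
        - a * (1 - t) * ((a / (1 + a * (1 - t) + b)) * t + 1) ^ 2 := by
  have hE : 0 < 1 + b + a * (1 - t) := by nlinarith
  have hE' : (1 + b + a * (1 - t)) ≠ 0 := hE.ne'
  have hE'' : (1 + a * (1 - t) + b) ≠ 0 := by intro h; apply hE'; linarith
  have key : (1 + a + b) * (1 + (a ^ 2 * (1 - t) * t) / (1 + b + a * (1 - t)) ^ 2)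
        - a * (1 - t) * ((a / (1 + a * (1 - t) + b)) * t + 1) ^ 2
      = ((1 + b + a * (1 - t)) + a * t) * (1 + b) / (1 + b + a * (1 - t)) := by
    field_simp
    ring
  rw [key]
  apply div_pos _ hE
  nlinarith [mul_nonneg ha ht0]

/-- The argument of the logarithm in the asymptotic throughput formula is positive:
`NR·x^∞(ī) − (P/s̄)(1−D̄)(1−ī s̄)(c ī s̄ + 1)² > 0`. -/
theorem throughput_log_argument_pos
    (P sbar ibar rbar D NR xinf c : ℝ)
    (hP : 0 < P) (hs : sbar ∈ Set.Ioc (0 : ℝ) 1) (hi : ibar ∈ Set.Icc (0 : ℝ) 1)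
    (hr : 0 ≤ rbar) (hD : D = (2 : ℝ) ^ (-rbar))
    (hNR : NR = 1 + (P / sbar) * (1 - D) + P * D)
    (hx : xinf = 1 + ((P / sbar) ^ 2 * (1 - D) ^ 2 * (1 - ibar * sbar) * (ibar * sbar)) /
      (1 + P * D + (P / sbar) * (1 - D) * (1 - ibar * sbar)) ^ 2)
    (hc : c = (P / sbar) * (1 - D) /
      (1 + (P / sbar) * (1 - D) * (1 - ibar * sbar) + P * D)) :
    0 < NR * xinf - (P / sbar) * (1 - D) * (1 - ibar * sbar) * (c * ibar * sbar + 1) ^ 2 := by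
  obtain ⟨hs0, hs1⟩ := hs
  obtain ⟨hi0, hi1⟩ := hi
  have hD0 : 0 < D := hD ▸ Real.rpow_pos_of_pos (by norm_num) _
  have hD1 : D ≤ 1 := by
    rw [hD]
    calc (2:ℝ) ^ (-rbar) ≤ (2:ℝ) ^ (0:ℝ) :=
      Real.rpow_le_rpow_of_exponent_le (by norm_num) (by linarith)
    _ = 1 := Real.rpow_zero 2
  have ht0 : 0 ≤ ibar * sbar := mul_nonneg hi0 hs0.le
  have ht1 : ibar * sbar ≤ 1 := by nlinarith
  have ha : 0 ≤ (P / sbar) * (1 - D) :=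
    mul_nonneg (div_nonneg hP.le hs0.le) (by linarith)
  have hb : 0 ≤ P * D := mul_nonneg hP.le hD0.le
  have key : NR * xinf - (P / sbar) * (1 - D) * (1 - ibar * sbar) * (c * ibar * sbar + 1) ^ 2
      = (1 + (P / sbar) * (1 - D) + P * D) *
          (1 + (((P / sbar) * (1 - D)) ^ 2 * (1 - ibar * sbar) * (ibar * sbar)) /
            (1 + P * D + (P / sbar) * (1 - D) * (1 - ibar * sbar)) ^ 2)
        - (P / sbar) * (1 - D) * (1 - ibar * sbar) *
          (((P / sbar) * (1 - D) / (1 + (P / sbar) * (1 - D) * (1 - ibar * sbar) + P * D))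
            * (ibar * sbar) + 1) ^ 2 := by
    rw [hNR, hx, hc]; ring
  rw [key]
  exact throughput_aux _ _ _ ha hb ht0 ht1
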